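/- arXiv:1708.07788 — 7 statements merged into one kernel-verified Lean document; each statement's English description precedes it below -/
import Mathlib

section
/- Let A be an n×n real symmetric matrix, Q an n×k real matrix, q_{k+1} ∈ ℝⁿ, β_{k+1} ∈ ℝ, and T a k×k real symmetric tridiagonal matrix satisfying the Lanczos relation A·Q = Q·T + β_{k+1}·q_{k+1}·e_kᵀ. Then for every real polynomial p with degree less than k, p(A)·(Q·e₁) = Q·(p(T)·e₁). -/
open Matrix Polynomial Set

/-- Euclidean norm of a vector in `ℝⁿ`. -/
noncomputable def vecNorm {n : ℕ} (v : Fin n → ℝ) : ℝ :=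
  Real.sqrt (∑ i, v i ^ 2)

/-- Spectral (operator) norm of a real matrix. -/
noncomputable def matNorm {m n : ℕ} (A : Matrix (Fin m) (Fin n) ℝ) : ℝ :=
  sSup {c : ℝ | ∃ v : Fin n → ℝ, vecNorm v ≤ 1 ∧ c = vecNorm (A.mulVec v)}

/-- Largest eigenvalue of a square real matrix. -/
noncomputable def lmax {n : ℕ} (A : Matrix (Fin n) (Fin n) ℝ) : ℝ :=
  sSup {μ : ℝ | ∃ v : Fin n → ℝ, v ≠ 0 ∧ A.mulVec v = μ • v}

/-- Smallest eigenvalue of a square real matrix. -/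
noncomputable def lmin {n : ℕ} (A : Matrix (Fin n) (Fin n) ℝ) : ℝ :=
  sInf {μ : ℝ | ∃ v : Fin n → ℝ, v ≠ 0 ∧ A.mulVec v = μ • v}

/-- A matrix is tridiagonal if `T i j = 0` whenever `|i - j| > 1`. -/
def IsTridiagonal {k : ℕ} (T : Matrix (Fin k) (Fin k) ℝ) : Prop :=
  ∀ i j : Fin k, 1 < |(i : ℤ) - (j : ℤ)| → T i j = 0

/-- The matrix function `f(A)` of a real symmetric matrix, defined through the
eigendecomposition `A = V Λ Vᵀ` as `V f(Λ) Vᵀ`. -/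
noncomputable def matFun {n : ℕ} {A : Matrix (Fin n) (Fin n) ℝ} (hA : A.IsHermitian)
    (f : ℝ → ℝ) : Matrix (Fin n) (Fin n) ℝ :=
  (hA.eigenvectorUnitary : Matrix (Fin n) (Fin n) ℝ) * Matrix.diagonal (f ∘ hA.eigenvalues) *
    star (hA.eigenvectorUnitary : Matrix (Fin n) (Fin n) ℝ)

/-- The `i`-th Chebyshev polynomial of the first kind, shifted and stretched to the range
`[lmin A - η, lmax A + η]`: with `r_max = lmax A + η`, `r_min = lmin A - η` and
`δ = 2 / (r_max - r_min)`, this is `y ↦ T_i (δ (y - r_min) - 1)`. -/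
noncomputable def shiftedCheb {n : ℕ} (A : Matrix (Fin n) (Fin n) ℝ) (η : ℝ) (i : ℕ) :
    Polynomial ℝ :=
  (Polynomial.Chebyshev.T ℝ i).comp
    (Polynomial.C (2 / ((lmax A + η) - (lmin A - η))) *
      (Polynomial.X - Polynomial.C (lmin A - η)) - 1)

lemma tridiagonal_pow_apply {k : ℕ} {T : Matrix (Fin k) (Fin k) ℝ} (hT : IsTridiagonal T) :
    ∀ (j : ℕ) (i l : Fin k), (j : ℤ) < |(i : ℤ) - (l : ℤ)| → (T ^ j) i l = 0 := by
  intro j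
  induction j with
  | zero =>
    intro i l h
    have : i ≠ l := by intro he; subst he; simp at h
    simp [Matrix.one_apply, this]
  | succ j ih =>
    intro i l h
    have he : (T ^ (j+1)) i l = ∑ m, T i m * (T ^ j) m l := by
      rw [pow_succ']; rfl
    rw [he]
    apply Finset.sum_eq_zero
    intro m _
    by_cases hm : 1 < |(i : ℤ) - (m : ℤ)|
    · rw [hT i m hm]; ring
    · push_neg at hm
      have hml : (j : ℤ) < |(m : ℤ) - (l : ℤ)| := by
        have := abs_sub_abs_le_abs_sub ((i:ℤ) - l) ((i:ℤ) - m)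
        simp only [sub_sub_sub_cancel_left] at this
        push_cast at h ⊢
        omega
      rw [ih m l hml]; ring

lemma sum_mulVec_distrib {m q : ℕ} (s : Finset ℕ) (f : ℕ → Matrix (Fin m) (Fin q) ℝ)
    (v : Fin q → ℝ) : (∑ i ∈ s, f i) *ᵥ v = ∑ i ∈ s, f i *ᵥ v :=
  map_sum (AddMonoidHom.mk' (fun M : Matrix (Fin m) (Fin q) ℝ => M *ᵥ v)
    (fun M N => Matrix.add_mulVec M N v)) f s

/-- In exact arithmetic, the Lanczos relation implies that any polynomial of
degree `< k` is applied exactly: `p(A)·(Q·e₁) = Q·(p(T)·e₁)`. -/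
theorem lanczos_applies_polynomials_exactly
    {n k : ℕ} (hk : 0 < k)
    (A : Matrix (Fin n) (Fin n) ℝ) (Q : Matrix (Fin n) (Fin k) ℝ)
    (qk1 : Fin n → ℝ) (β : ℝ) (T : Matrix (Fin k) (Fin k) ℝ)
    (hA : A.IsHermitian) (hT : T.IsHermitian) (hTtri : IsTridiagonal T)
    (hrel : A * Q = Q * T +
      β • Matrix.vecMulVec qk1 (Pi.single (⟨k - 1, Nat.sub_lt hk Nat.one_pos⟩ : Fin k) 1))
    (p : Polynomial ℝ) (hdeg : p.natDegree < k) :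
    (Polynomial.aeval A p).mulVec (Q.mulVec (Pi.single (⟨0, hk⟩ : Fin k) 1)) =
      Q.mulVec ((Polynomial.aeval T p).mulVec (Pi.single (⟨0, hk⟩ : Fin k) 1)) := by
  set e₁ : Fin k → ℝ := Pi.single (⟨0, hk⟩ : Fin k) 1 with he₁
  set ek : Fin k := ⟨k - 1, Nat.sub_lt hk Nat.one_pos⟩ with hek
  have key : ∀ j : ℕ, j < k →
      (A ^ j).mulVec (Q.mulVec e₁) = Q.mulVec ((T ^ j).mulVec e₁) := by
    intro j
    induction j with
    | zero => intro _; simp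
    | succ j ih =>
      intro hj
      have hj' : j < k := Nat.lt_of_succ_lt hj
      have step : (A ^ (j+1)).mulVec (Q.mulVec e₁)
          = (A * Q).mulVec ((T ^ j).mulVec e₁) := by
        rw [pow_succ', ← Matrix.mulVec_mulVec, ih hj', Matrix.mulVec_mulVec,
          Matrix.mulVec_mulVec, Matrix.mul_assoc]
      rw [step, hrel, Matrix.add_mulVec, Matrix.smul_mulVec]
      have hsum : ∑ x : Fin k, (T ^ j) ek x * e₁ x = 0 := by
        apply Finset.sum_eq_zero
        intro l _
        rcases eq_or_ne l (⟨0, hk⟩ : Fin k) with hl | hl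
        · subst hl
          have hz : (T ^ j) ek (⟨0, hk⟩ : Fin k) = 0 := by
            apply tridiagonal_pow_apply hTtri
            simp only [hek, Fin.val_mk]
            have : j + 1 < k := hj
            rw [abs_of_nonneg (by push_cast; omega)]
            push_cast
            omega
          rw [hz]; ring
        · rw [he₁, Pi.single_eq_of_ne hl]; ring
      have hzero : (Matrix.vecMulVec qk1 (Pi.single ek 1)).mulVec
          ((T ^ j).mulVec e₁) = 0 := by
        funext i
        simp only [Matrix.mulVec, dotProduct, Matrix.vecMulVec_apply, Pi.zero_apply]
        apply Finset.sum_eq_zero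
        intro m _
        rcases eq_or_ne m ek with hm | hm
        · rw [hm, Pi.single_eq_same, hsum]; ring
        · rw [Pi.single_eq_of_ne hm]; ring
      rw [hzero, smul_zero, add_zero, Matrix.mulVec_mulVec, Matrix.mulVec_mulVec,
        Matrix.mul_assoc, ← pow_succ']
  rw [Polynomial.aeval_eq_sum_range' hdeg A, Polynomial.aeval_eq_sum_range' hdeg T,
    sum_mulVec_distrib, sum_mulVec_distrib]
  have hQ : Q *ᵥ (∑ i ∈ Finset.range k, (p.coeff i • T ^ i) *ᵥ e₁)
      = ∑ i ∈ Finset.range k, Q *ᵥ ((p.coeff i • T ^ i) *ᵥ e₁) := by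
    have h2 := map_sum Q.mulVecLin (fun i => (p.coeff i • T ^ i) *ᵥ e₁) (Finset.range k)
    simp only [Matrix.mulVecLin_apply] at h2
    exact h2
  rw [hQ]
  apply Finset.sum_congr rfl
  intro i hi
  rw [Matrix.smul_mulVec, Matrix.smul_mulVec, Matrix.mulVec_smul,
    key i (Finset.mem_range.mp hi)]
end

section
/- Let A be an n×n real symmetric matrix, Q an n×k real matrix, q_{k+1} ∈ ℝⁿ, β_{k+1} ∈ ℝ, and T a k×k real symmetric tridiagonal matrix such that A·Q = Q·T + β_{k+1}·q_{k+1}·e_kᵀ and the n×(k+1) matrix [Q, q_{k+1}] has orthonormal columns. Let x ∈ ℝⁿ be nonzero with Q·e₁ = x/‖x‖, let f : ℝ → ℝ, and set y = ‖x‖ · Q·f(T)·e₁. Then for every real polynomial p of degree less than k and every real D such that |f(t) − p(t)| ≤ D for all t ∈ [λmin(A), λmax(A)], one has ‖f(A)·x − y‖ ≤ 2D‖x‖. -/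
open Matrix Polynomial Set

/-!
Because `p` has degree `< k`, the Lanczos relation reproduces it exactly:
`p(A) x = ‖x‖ Q p(T) e₁`, since the residual `β q eₖᵀ` only ever meets the `(k, 1)` entry of a
power `Tʲ` with `j < k - 1`, which vanishes because `T` is tridiagonal. Hence
`f(A) x - y = (f - p)(A) x - ‖x‖ Q (f - p)(T) e₁`. The orthonormality of `[Q, q]` makes
`T = Qᵀ A Q` a compression of `A`, so by the Rayleigh quotient bounds the eigenvalues of `T`,
like those of `A`, lie in `[λmin(A), λmax(A)]`, where `|f - p| ≤ D`. Each of the two terms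
therefore has norm at most `D ‖x‖`.
-/

open scoped MatrixOrder

lemma vecNorm_eq_sqrt_dotProduct {n : ℕ} (v : Fin n → ℝ) : vecNorm v = √(v ⬝ᵥ v) := by
  simp only [vecNorm, dotProduct, sq]

lemma vecNorm_eq_norm_toLp {n : ℕ} (v : Fin n → ℝ) : vecNorm v = ‖WithLp.toLp 2 v‖ := by
  simp [vecNorm, EuclideanSpace.norm_eq]

lemma vecNorm_nonneg {n : ℕ} (v : Fin n → ℝ) : 0 ≤ vecNorm v := Real.sqrt_nonneg _

lemma vecNorm_ne_zero {n : ℕ} {v : Fin n → ℝ} (hv : v ≠ 0) : vecNorm v ≠ 0 := by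
  simpa [vecNorm_eq_norm_toLp] using hv

lemma vecNorm_sub_le {n : ℕ} (u v : Fin n → ℝ) : vecNorm (u - v) ≤ vecNorm u + vecNorm v := by
  simpa only [vecNorm_eq_norm_toLp, WithLp.toLp_sub] using norm_sub_le _ _

lemma vecNorm_smul {n : ℕ} (c : ℝ) (v : Fin n → ℝ) : vecNorm (c • v) = |c| * vecNorm v := by
  simp only [vecNorm_eq_norm_toLp, WithLp.toLp_smul, norm_smul, Real.norm_eq_abs]

lemma vecNorm_single_one {n : ℕ} (i : Fin n) : vecNorm (Pi.single i 1) = 1 := by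
  simp [vecNorm_eq_sqrt_dotProduct]

lemma vecNorm_mulVec_of_transpose_mul_self {m n : ℕ} {Q : Matrix (Fin m) (Fin n) ℝ}
    (hQ : Qᵀ * Q = 1) (v : Fin n → ℝ) : vecNorm (Q *ᵥ v) = vecNorm v := by
  rw [vecNorm_eq_sqrt_dotProduct, vecNorm_eq_sqrt_dotProduct, dotProduct_mulVec,
    ← mulVec_transpose, mulVec_mulVec, hQ, one_mulVec]

lemma setOf_eigenvalue_eq_spectrum {n : ℕ} (A : Matrix (Fin n) (Fin n) ℝ) :
    {μ : ℝ | ∃ v : Fin n → ℝ, v ≠ 0 ∧ A *ᵥ v = μ • v} = spectrum ℝ A := by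
  ext μ
  rw [← spectrum_toLin', ← Module.End.hasEigenvalue_iff_mem_spectrum]
  simp [Module.End.hasEigenvalue_iff, Submodule.ne_bot_iff, and_comm]

lemma spectrum_subset_Icc_lmin_lmax {n : ℕ} (A : Matrix (Fin n) (Fin n) ℝ) :
    spectrum ℝ A ⊆ Icc (lmin A) (lmax A) := by
  intro μ hμ
  rw [lmin, lmax, setOf_eigenvalue_eq_spectrum]
  exact ⟨csInf_le A.finite_real_spectrum.bddBelow hμ, le_csSup A.finite_real_spectrum.bddAbove hμ⟩

section Rayleigh

variable {ι : Type*} [Fintype ι] [DecidableEq ι] {A : Matrix ι ι ℝ}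

lemma dotProduct_mulVec_le_of_spectrum_le (hA : A.IsHermitian) {c : ℝ}
    (h : ∀ μ ∈ spectrum ℝ A, μ ≤ c) (v : ι → ℝ) : v ⬝ᵥ (A *ᵥ v) ≤ c * (v ⬝ᵥ v) := by
  have := (le_algebraMap_of_spectrum_le h hA.isSelfAdjoint).dotProduct_mulVec_nonneg v
  simpa [sub_mulVec, Algebra.algebraMap_eq_smul_one, smul_mulVec] using this

lemma le_dotProduct_mulVec_of_le_spectrum (hA : A.IsHermitian) {c : ℝ}
    (h : ∀ μ ∈ spectrum ℝ A, c ≤ μ) (v : ι → ℝ) : c * (v ⬝ᵥ v) ≤ v ⬝ᵥ (A *ᵥ v) := by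
  have := (algebraMap_le_of_le_spectrum h hA.isSelfAdjoint).dotProduct_mulVec_nonneg v
  simpa [sub_mulVec, Algebra.algebraMap_eq_smul_one, smul_mulVec] using this

end Rayleigh

lemma spectrum_transpose_mul_mul_subset_Icc_lmin_lmax {m n : ℕ} {A : Matrix (Fin n) (Fin n) ℝ}
    (hA : A.IsHermitian) {Q : Matrix (Fin n) (Fin m) ℝ} (hQ : Qᵀ * Q = 1) :
    spectrum ℝ (Qᵀ * A * Q) ⊆ Icc (lmin A) (lmax A) := by
  intro μ hμ
  rw [← setOf_eigenvalue_eq_spectrum] at hμ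
  obtain ⟨w, hw, hμw⟩ := hμ
  have hpos : 0 < w ⬝ᵥ w := by simpa using dotProduct_star_self_pos_iff.mpr hw
  have hnorm : (Q *ᵥ w) ⬝ᵥ (Q *ᵥ w) = w ⬝ᵥ w := by
    rw [dotProduct_mulVec, ← mulVec_transpose, mulVec_mulVec, hQ, one_mulVec, dotProduct_comm]
  have hray : (Q *ᵥ w) ⬝ᵥ (A *ᵥ (Q *ᵥ w)) = μ * (w ⬝ᵥ w) := by
    rw [← smul_eq_mul, ← dotProduct_smul, ← hμw, ← mulVec_mulVec, ← mulVec_mulVec,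
      dotProduct_mulVec w Qᵀ, vecMul_transpose]
  have hspec := spectrum_subset_Icc_lmin_lmax A
  constructor
  · have := le_dotProduct_mulVec_of_le_spectrum hA (fun ν hν => (hspec hν).1) (Q *ᵥ w)
    rw [hnorm, hray] at this
    exact le_of_mul_le_mul_right this hpos
  · have := dotProduct_mulVec_le_of_spectrum_le hA (fun ν hν => (hspec hν).2) (Q *ᵥ w)
    rw [hnorm, hray] at this
    exact le_of_mul_le_mul_right this hpos

lemma matFun_eq_cfc {n : ℕ} {A : Matrix (Fin n) (Fin n) ℝ} (hA : A.IsHermitian) (f : ℝ → ℝ) :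
    matFun hA f = cfc f A := by
  rw [hA.cfc_eq, IsHermitian.cfc, Unitary.conjStarAlgAut_apply, matFun,
    RCLike.ofReal_real_eq_id, Function.id_comp]

lemma cfc_sub_eval_eq_matFun_sub_aeval {n : ℕ} {A : Matrix (Fin n) (Fin n) ℝ}
    (hA : A.IsHermitian) (f : ℝ → ℝ) (p : ℝ[X]) :
    cfc (fun t => f t - p.eval t) A = matFun hA f - aeval A p := by
  rw [cfc_sub f (fun t => p.eval t) A (A.finite_real_spectrum.continuousOn f),
    cfc_polynomial p A hA.isSelfAdjoint, matFun_eq_cfc]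

lemma vecNorm_cfc_mulVec_le {n : ℕ} {A : Matrix (Fin n) (Fin n) ℝ} (hA : A.IsHermitian)
    {g : ℝ → ℝ} {D : ℝ} (hD : 0 ≤ D) (hg : ∀ μ ∈ spectrum ℝ A, |g μ| ≤ D) (v : Fin n → ℝ) :
    vecNorm (cfc g A *ᵥ v) ≤ D * vecNorm v := by
  have hcont : ContinuousOn g (spectrum ℝ A) := A.finite_real_spectrum.continuousOn g
  have hsq : (cfc g A)ᵀ * cfc g A = cfc (fun μ => g μ * g μ) A := by
    rw [← conjTranspose_eq_transpose_of_trivial, ← star_eq_conjTranspose,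
      (cfc_predicate g A : IsSelfAdjoint _).star_eq, cfc_mul g g A]
  have hspec : ∀ μ ∈ spectrum ℝ (cfc (fun μ => g μ * g μ) A), μ ≤ D * D := by
    rw [cfc_map_spectrum (fun μ => g μ * g μ) A hA.isSelfAdjoint (hcont.mul hcont)]
    rintro _ ⟨μ, hμ, rfl⟩
    simpa only [abs_mul_abs_self] using mul_self_le_mul_self (abs_nonneg _) (hg μ hμ)
  rw [vecNorm_eq_sqrt_dotProduct, vecNorm_eq_sqrt_dotProduct, dotProduct_mulVec,
    ← mulVec_transpose, mulVec_mulVec, hsq, ← Real.sqrt_mul_self hD,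
    ← Real.sqrt_mul (mul_self_nonneg D), dotProduct_comm]
  exact Real.sqrt_le_sqrt <| dotProduct_mulVec_le_of_spectrum_le
    (cfc_predicate (fun μ => g μ * g μ) A : IsSelfAdjoint _).isHermitian hspec v

lemma IsTridiagonal.pow_apply_eq_zero {k : ℕ} {T : Matrix (Fin k) (Fin k) ℝ}
    (hT : IsTridiagonal T) (j : ℕ) {i l : Fin k} (hil : (j : ℤ) < |(i : ℤ) - l|) :
    (T ^ j) i l = 0 := by
  induction j generalizing l with
  | zero =>
    exact one_apply_ne (by
      rintro rfl
      simp only [sub_self, abs_zero, Nat.cast_zero, lt_self_iff_false] at hil)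
  | succ j ih =>
    rw [pow_succ, mul_apply]
    refine Finset.sum_eq_zero fun r _ => ?_
    by_cases hir : (j : ℤ) < |(i : ℤ) - r|
    · rw [ih hir, zero_mul]
    · have h := abs_sub_abs_le_abs_sub ((i : ℤ) - l) ((i : ℤ) - r)
      rw [sub_sub_sub_cancel_left] at h
      push_cast at hil
      rw [hT r l (by linarith), mul_zero]

section Krylov

variable {R m l : Type*} [CommRing R] [Fintype m] [Fintype l] [DecidableEq m] [DecidableEq l]
  {A : Matrix m m R} {Q E : Matrix m l R} {T : Matrix l l R} {v : l → R} {k : ℕ}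

theorem pow_mulVec_mulVec_of_mul_eq_add (hAQ : A * Q = Q * T + E)
    (hE : ∀ j, j + 1 < k → E *ᵥ (T ^ j *ᵥ v) = 0) :
    ∀ j < k, A ^ j *ᵥ (Q *ᵥ v) = Q *ᵥ (T ^ j *ᵥ v) := by
  intro j hj
  induction j with
  | zero => simp
  | succ j ih =>
    rw [pow_succ', pow_succ', ← mulVec_mulVec, ih (by omega), mulVec_mulVec, hAQ, add_mulVec,
      hE j hj, add_zero]
    simp only [mulVec_mulVec, Matrix.mul_assoc]

theorem aeval_mulVec_mulVec_of_mul_eq_add (hAQ : A * Q = Q * T + E)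
    (hE : ∀ j, j + 1 < k → E *ᵥ (T ^ j *ᵥ v) = 0) {p : R[X]} (hp : p.natDegree < k) :
    aeval A p *ᵥ (Q *ᵥ v) = Q *ᵥ (aeval T p *ᵥ v) := by
  simp only [aeval_eq_sum_range' hp, sum_mulVec, mulVec_sum, smul_mulVec, mulVec_smul]
  refine Finset.sum_congr rfl fun j hj => ?_
  rw [pow_mulVec_mulVec_of_mul_eq_add hAQ hE j (Finset.mem_range.mp hj)]

end Krylov

lemma aeval_mulVec_mulVec_single_of_lanczos {n k : ℕ} (hk : 0 < k)
    {A : Matrix (Fin n) (Fin n) ℝ} {Q : Matrix (Fin n) (Fin k) ℝ} {q : Fin n → ℝ} {β : ℝ}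
    {T : Matrix (Fin k) (Fin k) ℝ} (hT : IsTridiagonal T)
    (hAQ : A * Q = Q * T +
      β • vecMulVec q (Pi.single (⟨k - 1, Nat.sub_lt hk Nat.one_pos⟩ : Fin k) 1))
    {p : ℝ[X]} (hp : p.natDegree < k) :
    aeval A p *ᵥ (Q *ᵥ Pi.single ⟨0, hk⟩ 1) = Q *ᵥ (aeval T p *ᵥ Pi.single ⟨0, hk⟩ 1) := by
  refine aeval_mulVec_mulVec_of_mul_eq_add hAQ (fun j hj => ?_) hp
  have hcorner : (T ^ j) ⟨k - 1, Nat.sub_lt hk Nat.one_pos⟩ ⟨0, hk⟩ = 0 :=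
    hT.pow_apply_eq_zero j (by
      simp only [CharP.cast_eq_zero, sub_zero, Nat.abs_cast, Nat.cast_lt]
      omega)
  simp [smul_mulVec, vecMulVec_mulVec, hcorner]

lemma transpose_mul_self_eq_one_and_transpose_mulVec_eq_zero {m n : ℕ}
    {Q : Matrix (Fin m) (Fin n) ℝ} {q : Fin m → ℝ}
    (h : (fromCols Q (replicateCol (Fin 1) q))ᵀ * fromCols Q (replicateCol (Fin 1) q) = 1) :
    Qᵀ * Q = 1 ∧ Qᵀ *ᵥ q = 0 := by
  rw [transpose_fromCols, fromRows_mul_fromCols, ← fromBlocks_one, fromBlocks_inj] at h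
  refine ⟨h.1, funext fun i => ?_⟩
  simpa [mul_apply, mulVec, dotProduct] using congrFun (congrFun h.2.1 i) 0

/-- Exact-arithmetic function approximation guarantee for Lanczos:
if `|f - p| ≤ D` uniformly on `[λmin(A), λmax(A)]` for some polynomial `p` of degree `< k`,
then the Lanczos output `y = ‖x‖·Q·f(T)·e₁` satisfies `‖f(A)x - y‖ ≤ 2 D ‖x‖`. -/
theorem lanczos_exact_function_approximation
    {n k : ℕ} (hk : 0 < k)
    (A : Matrix (Fin n) (Fin n) ℝ) (Q : Matrix (Fin n) (Fin k) ℝ)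
    (qk1 : Fin n → ℝ) (β : ℝ) (T : Matrix (Fin k) (Fin k) ℝ)
    (hA : A.IsHermitian) (hT : T.IsHermitian) (hTtri : IsTridiagonal T)
    (hrel : A * Q = Q * T +
      β • Matrix.vecMulVec qk1 (Pi.single (⟨k - 1, Nat.sub_lt hk Nat.one_pos⟩ : Fin k) 1))
    (horth : (Matrix.fromCols Q (Matrix.replicateCol (Fin 1) qk1))ᵀ *
      Matrix.fromCols Q (Matrix.replicateCol (Fin 1) qk1) = 1)
    (x : Fin n → ℝ) (hx : x ≠ 0)
    (hq1 : Q.mulVec (Pi.single (⟨0, hk⟩ : Fin k) 1) = (vecNorm x)⁻¹ • x)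
    (f : ℝ → ℝ) (y : Fin n → ℝ)
    (hy : y = vecNorm x • Q.mulVec ((matFun hT f).mulVec (Pi.single (⟨0, hk⟩ : Fin k) 1)))
    (p : Polynomial ℝ) (hdeg : p.natDegree < k) (D : ℝ)
    (hD : ∀ t ∈ Set.Icc (lmin A) (lmax A), |f t - p.eval t| ≤ D) :
    vecNorm ((matFun hA f).mulVec x - y) ≤ 2 * D * vecNorm x := by
  set e₁ : Fin k → ℝ := Pi.single ⟨0, hk⟩ 1
  set g : ℝ → ℝ := fun t => f t - p.eval t
  obtain ⟨hQQ, hQq⟩ := transpose_mul_self_eq_one_and_transpose_mulVec_eq_zero horth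
  have hTA : T = Qᵀ * A * Q := by
    rw [Matrix.mul_assoc, hrel, Matrix.mul_add, ← Matrix.mul_assoc, hQQ, Matrix.mul_smul,
      mul_vecMulVec, hQq]
    simp
  have hgA : ∀ μ ∈ spectrum ℝ A, |g μ| ≤ D :=
    fun μ hμ => hD μ (spectrum_subset_Icc_lmin_lmax A hμ)
  have hgT : ∀ μ ∈ spectrum ℝ T, |g μ| ≤ D :=
    fun μ hμ => hD μ (spectrum_transpose_mul_mul_subset_Icc_lmin_lmax hA hQQ (hTA ▸ hμ))
  have hD0 : 0 ≤ D := (abs_nonneg _).trans (hgT _ (hT.eigenvalues_mem_spectrum_real ⟨0, hk⟩))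
  have hpx : aeval A p *ᵥ x = vecNorm x • (Q *ᵥ (aeval T p *ᵥ e₁)) := by
    conv_lhs => rw [← smul_inv_smul₀ (vecNorm_ne_zero hx) x, ← hq1]
    rw [mulVec_smul, aeval_mulVec_mulVec_single_of_lanczos hk hTtri hrel hdeg]
  have herr : matFun hA f *ᵥ x - y = cfc g A *ᵥ x - vecNorm x • (Q *ᵥ (cfc g T *ᵥ e₁)) := by
    rw [cfc_sub_eval_eq_matFun_sub_aeval hA, cfc_sub_eval_eq_matFun_sub_aeval hT, sub_mulVec,
      sub_mulVec, mulVec_sub, smul_sub, hpx, hy]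
    abel
  calc vecNorm (matFun hA f *ᵥ x - y)
      ≤ vecNorm (cfc g A *ᵥ x) + |vecNorm x| * vecNorm (Q *ᵥ (cfc g T *ᵥ e₁)) := by
        rw [herr, ← vecNorm_smul]
        exact vecNorm_sub_le _ _
    _ ≤ D * vecNorm x + vecNorm x * (D * vecNorm e₁) := by
        rw [abs_of_nonneg (vecNorm_nonneg x), vecNorm_mulVec_of_transpose_mul_self hQQ]
        exact add_le_add (vecNorm_cfc_mulVec_le hA hD0 hgA x) (mul_le_mul_of_nonneg_left
          (vecNorm_cfc_mulVec_le hT hD0 hgT e₁) (vecNorm_nonneg x))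
    _ = 2 * D * vecNorm x := by rw [vecNorm_single_one]; ring
end

section
/- Let κ ≥ 1 and η ≥ 0 be real numbers. For every real polynomial p of degree k with p(0) = 1, there exist a natural number m ≤ k and real numbers r₁, …, r_m ∈ [1/κ, 1 + η] such that for all x ∈ [1/κ, 1 + η], ∏_{i=1}^m |1 − x/r_i| ≤ |p(x)|. -/
open Matrix Polynomial Set

/-!
Over `ℂ`, the normalisation `p(0) = 1` gives `p(x) = ∏ (1 - x / zᵢ)` over the complex roots `zᵢ`.
For `x > 0` the reverse triangle inequality `|x - ‖z‖| ≤ ‖x - z‖` lets each root be replaced by its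
modulus, and moving a positive radius `s` towards `x`, i.e. projecting it onto an interval containing
`x`, can only decrease `|1 - x / s|`.
-/

theorem Polynomial.Splits.eval_eq_prod_roots_one_sub_div {K : Type*} [Field K] {f : K[X]}
    (hf : f.Splits) (h0 : f.eval 0 = 1) (x : K) :
    f.eval x = (f.roots.map fun z => 1 - x / z).prod := by
  have hroot : ∀ z ∈ f.roots, z ≠ 0 := by
    rintro z hz rfl
    simp [(isRoot_of_mem_roots hz).eq_zero] at h0
  have hlc : f.leadingCoeff * (f.roots.map fun z => -z).prod = 1 := by
    simpa [hf.eval_eq_prod_roots] using h0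
  have hfactor : (f.roots.map fun z => x - z) =
      f.roots.map fun z => -z * (1 - x / z) :=
    Multiset.map_congr rfl fun z hz => by field_simp [hroot z hz]; ring
  rw [hf.eval_eq_prod_roots, hfactor, Multiset.prod_map_mul, ← mul_assoc, hlc, one_mul]

theorem abs_one_sub_div_norm_le {𝕜 : Type*} [RCLike 𝕜] {x : ℝ} (hx : 0 ≤ x) (z : 𝕜) :
    |1 - x / ‖z‖| ≤ ‖1 - (x : 𝕜) / z‖ := by
  rcases eq_or_ne z 0 with rfl | hz
  · simp
  have hz' : 0 < ‖z‖ := norm_pos_iff.mpr hz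
  calc |1 - x / ‖z‖| = |‖z‖ - ‖(x : 𝕜)‖| / ‖z‖ := by
        rw [RCLike.norm_of_nonneg hx, ← abs_of_pos hz', ← abs_div, abs_of_pos hz']
        congr 1; field_simp
    _ ≤ ‖z - x‖ / ‖z‖ := by gcongr; exact abs_norm_sub_norm_le z x
    _ = ‖1 - (x : 𝕜) / z‖ := by rw [← norm_div, sub_div, div_self hz]

theorem abs_one_sub_div_projIcc_le {a b x s : ℝ} (ha : 0 < a) (hab : a ≤ b) (hx : x ∈ Icc a b)
    (hs : 0 < s) : |1 - x / projIcc a b hab s| ≤ |1 - x / s| := by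
  have hx0 : 0 < x := ha.trans_le hx.1
  rcases le_or_gt s a with hsa | has
  · rw [projIcc_of_le_left hab hsa]
    have h1 : 1 ≤ x / a := (one_le_div ha).mpr hx.1
    have h2 : x / a ≤ x / s := div_le_div_of_nonneg_left hx0.le hs hsa
    rw [abs_of_nonpos (by linarith), abs_of_nonpos (by linarith)]
    linarith
  rcases le_or_gt b s with hbs | hsb
  · rw [projIcc_of_right_le hab hbs]
    have hb : 0 < b := ha.trans_le hab
    have h1 : x / b ≤ 1 := (div_le_one hb).mpr hx.2
    have h2 : x / s ≤ x / b := div_le_div_of_nonneg_left hx0.le hb hbs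
    rw [abs_of_nonneg (by linarith), abs_of_nonneg (by linarith)]
    linarith
  · rw [projIcc_of_mem hab ⟨has.le, hsb.le⟩]

theorem Polynomial.exists_abs_eval_eq_prod_norm_one_sub_div {p : ℝ[X]} (hp0 : p.eval 0 = 1) :
    ∃ m ≤ p.natDegree, ∃ z : Fin m → ℂ, (∀ i, z i ≠ 0) ∧
      ∀ x : ℝ, |p.eval x| = ∏ i, ‖1 - (x : ℂ) / z i‖ := by
  set P := p.map (algebraMap ℝ ℂ)
  have hP : ∀ x : ℝ, P.eval (x : ℂ) = p.eval x := fun x => by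
    simpa [P, eval_map_algebraMap] using aeval_algebraMap_apply_eq_algebraMap_eval (A := ℂ) x p
  have hP0 : P.eval 0 = 1 := by simpa [hp0] using hP 0
  set L := P.roots.toList
  refine ⟨L.length, ?_, fun i => L[(i : ℕ)], fun i h => ?_, fun x => ?_⟩
  · simpa [L] using (card_roots' P).trans natDegree_map_le
  · have hroot := isRoot_of_mem_roots (Multiset.mem_toList.mp (L.getElem_mem i.isLt))
    rw [show L[(i : ℕ)] = 0 from h] at hroot
    simp [hroot.eq_zero] at hP0
  · dsimp only
    rw [Fin.prod_univ_fun_getElem L fun z => ‖1 - (x : ℂ) / z‖, ← Real.norm_eq_abs,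
      ← Complex.norm_real, ← hP, (IsAlgClosed.splits P).eval_eq_prod_roots_one_sub_div hP0, Multiset.prod_map_toList]
    exact (map_multiset_prod (normHom : ℂ →*₀ ℝ) _).trans (by rw [Multiset.map_map]; rfl)

/-- Any polynomial of degree `k` with `p(0) = 1` is lower bounded in absolute
value on `[1/κ, 1 + η]` by a product `∏ |1 - x/rᵢ|` over at most `k` roots
`rᵢ ∈ [1/κ, 1 + η]`. -/
theorem polynomial_dominates_real_rooted_in_range
    (κ η : ℝ) (hκ : 1 ≤ κ) (hη : 0 ≤ η)
    (k : ℕ) (p : Polynomial ℝ) (hdeg : p.natDegree = k) (hp0 : p.eval 0 = 1) :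
    ∃ m : ℕ, m ≤ k ∧ ∃ r : Fin m → ℝ,
      (∀ i, r i ∈ Set.Icc (1 / κ) (1 + η)) ∧
      ∀ x ∈ Set.Icc (1 / κ) (1 + η), (∏ i, |1 - x / r i|) ≤ |p.eval x| := by
  have hpos : 0 < 1 / κ := one_div_pos.mpr (by linarith)
  have hle : 1 / κ ≤ 1 + η := ((div_le_one (by linarith)).mpr hκ).trans (by linarith)
  obtain ⟨m, hm, z, hz, hpz⟩ := exists_abs_eval_eq_prod_norm_one_sub_div hp0
  refine ⟨m, hdeg ▸ hm, fun i => projIcc (1 / κ) (1 + η) hle ‖z i‖, fun i => Subtype.prop _,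
    fun x hx => ?_⟩
  rw [hpz]
  gcongr with i
  calc |1 - x / projIcc (1 / κ) (1 + η) hle ‖z i‖|
      ≤ |1 - x / ‖z i‖| := abs_one_sub_div_projIcc_le hpos hle hx (norm_pos_iff.mpr (hz i))
    _ ≤ ‖1 - (x : ℂ) / z i‖ := abs_one_sub_div_norm_le (hpos.le.trans hx.1) (z i)
end

section
/- There exists a constant c > 0 such that for every real κ ≥ 2, every real polynomial p satisfying p(0) = 1 and |p(x)| ≤ 1/3 for all x ∈ [1/κ, 1] has degree at least c·√κ/ln κ. -/
open Matrix Polynomial Set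

/-! Rescaling `[1/κ, 1]` onto `[-1, 1]` sends `0` to `y = (κ + 1) / (κ - 1) > 1`, so the extremal
property of Chebyshev polynomials outside `[-1, 1]` gives `3 = 3 |p 0| ≤ T_N y = cosh (N arcosh y)`
with `N = deg p`. As `arcosh y ≤ √(y² - 1) ≤ 4 / √κ`, this forces `N ≥ log 3 · √κ / 4`, which is
stronger than the claim by a factor `log κ`. -/

open Real

theorem Real.arcosh_le_sqrt_sq_sub_one {x : ℝ} (hx : 1 ≤ x) : arcosh x ≤ √(x ^ 2 - 1) := by
  rw [← sinh_arcosh hx]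
  exact self_le_sinh_iff.mpr (arcosh_nonneg hx)

namespace Polynomial.Chebyshev

theorem eval_T_real_le_exp (n : ℕ) {x : ℝ} (hx : 1 ≤ x) :
    (T ℝ n).eval x ≤ exp (n * arcosh x) := by
  have hs : 0 ≤ (n : ℝ) * arcosh x := mul_nonneg n.cast_nonneg (arcosh_nonneg hx)
  calc (T ℝ n).eval x = (T ℝ n).eval (cosh (arcosh x)) := by rw [cosh_arcosh hx]
    _ = cosh (n * arcosh x) := by exact_mod_cast T_real_cosh (arcosh x) n
    _ ≤ exp (n * arcosh x) := by
      rw [cosh_eq]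
      linarith [exp_le_exp.mpr (neg_le_self hs)]

theorem abs_eval_le_mul_eval_T_real {n : ℕ} {P : ℝ[X]} (hP : P.degree ≤ n) {M : ℝ}
    (hM : 0 < M) (hPM : ∀ y ∈ Icc (-1 : ℝ) 1, |P.eval y| ≤ M) {y : ℝ} (hy : 1 ≤ y) :
    |P.eval y| ≤ M * (T ℝ n).eval y := by
  have eval_le {Q : ℝ[X]} (hQ : Q.degree ≤ n) (hQM : ∀ y ∈ Icc (-1 : ℝ) 1, |Q.eval y| ≤ M) :
      Q.eval y ≤ M * (T ℝ n).eval y := by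
    have hQ' : (Polynomial.C M⁻¹ * Q).degree ≤ n := by rwa [degree_C_mul (inv_ne_zero hM.ne')]
    have hQM' : ∀ y ∈ Icc (-1 : ℝ) 1, |(Polynomial.C M⁻¹ * Q).eval y| ≤ 1 := fun y hy => by
      rw [eval_mul, eval_C, abs_mul, abs_inv, abs_of_pos hM, inv_mul_le_iff₀ hM, mul_one]
      exact hQM y hy
    have := eval_iterate_derivative_le_of_forall_abs_le_one (k := 0) hy hQ' hQM'
    rwa [Function.iterate_zero_apply, Function.iterate_zero_apply, eval_mul, eval_C,
      inv_mul_le_iff₀ hM] at this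
  rw [abs_le']
  refine ⟨eval_le hP hPM, ?_⟩
  simpa using eval_le (Q := -P) (by rwa [degree_neg]) (by simpa using hPM)

theorem abs_eval_le_mul_eval_T_real_of_le_left {p : ℝ[X]} {n : ℕ} (hp : p.natDegree ≤ n)
    {a b M x₀ : ℝ} (hab : a < b) (hM : 0 < M) (hpM : ∀ x ∈ Icc a b, |p.eval x| ≤ M)
    (hx₀ : x₀ ≤ a) :
    |p.eval x₀| ≤ M * (T ℝ n).eval ((a + b - 2 * x₀) / (b - a)) := by
  have hba : 0 < b - a := sub_pos.mpr hab
  set P := p.comp (Polynomial.C (-(b - a) / 2) * X + Polynomial.C ((a + b) / 2))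
  have hP_eval (y : ℝ) : P.eval y = p.eval (-(b - a) / 2 * y + (a + b) / 2) := by simp [P]
  have hP_deg : P.degree ≤ n := by
    refine degree_le_of_natDegree_le (natDegree_comp_le.trans ?_)
    nlinarith [natDegree_linear_le (a := -(b - a) / 2) (b := (a + b) / 2)]
  have hPM (y : ℝ) (hy : y ∈ Icc (-1 : ℝ) 1) : |P.eval y| ≤ M := by
    rw [hP_eval]
    exact hpM _ ⟨by nlinarith [hy.2], by nlinarith [hy.1]⟩
  have hy : 1 ≤ (a + b - 2 * x₀) / (b - a) := by rw [le_div_iff₀ hba]; linarith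
  have := abs_eval_le_mul_eval_T_real hP_deg hM hPM hy
  rwa [hP_eval, show -(b - a) / 2 * ((a + b - 2 * x₀) / (b - a)) + (a + b) / 2 = x₀ by
    field_simp; ring] at this

end Polynomial.Chebyshev

open Polynomial.Chebyshev in
theorem log_three_mul_sqrt_le_four_mul_natDegree {κ : ℝ} (hκ : 2 ≤ κ) {p : ℝ[X]}
    (hp0 : p.eval 0 = 1) (hp : ∀ x ∈ Icc (1 / κ) 1, |p.eval x| ≤ 1 / 3) :
    log 3 * √κ ≤ 4 * p.natDegree := by
  have hκ0 : 0 < κ := by linarith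
  have hκ1 : 0 < κ - 1 := by linarith
  have hT := abs_eval_le_mul_eval_T_real_of_le_left le_rfl
    (by rw [div_lt_one hκ0]; linarith) (by norm_num) hp (by positivity)
  rw [hp0, abs_one, show (1 / κ + 1 - 2 * 0) / (1 - 1 / κ) = (κ + 1) / (κ - 1) by
    field_simp; ring] at hT
  have hy_sq : ((κ + 1) / (κ - 1)) ^ 2 - 1 = 4 * κ / (κ - 1) ^ 2 := by field_simp; ring
  set y := (κ + 1) / (κ - 1)
  have hy1 : 1 ≤ y := by rw [le_div_iff₀ hκ1]; linarith
  have hexp : 3 ≤ exp (p.natDegree * arcosh y) := by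
    linarith [eval_T_real_le_exp p.natDegree hy1]
  have harcosh : arcosh y ≤ 4 / √κ := by
    refine (arcosh_le_sqrt_sq_sub_one hy1).trans ?_
    rw [show (4 : ℝ) / √κ = √(16 / κ) by
      rw [sqrt_div (by norm_num), show (16 : ℝ) = 4 ^ 2 by norm_num, sqrt_sq (by norm_num)]]
    refine sqrt_le_sqrt ?_
    rw [hy_sq, div_le_div_iff₀ (by positivity) hκ0]
    nlinarith
  have hsqrt : 0 < √κ := sqrt_pos.mpr hκ0
  calc log 3 * √κ ≤ p.natDegree * arcosh y * √κ := by
        gcongr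
        exact (log_le_iff_le_exp (by norm_num)).mpr hexp
    _ ≤ p.natDegree * (4 / √κ) * √κ := by gcongr
    _ = 4 * p.natDegree := by field_simp

/-- Near-optimality of Chebyshev polynomials: there is a constant `c > 0` such
that for every `κ ≥ 2`, any polynomial with `p(0) = 1` and `|p(x)| ≤ 1/3` on `[1/κ, 1]` has
degree at least `c·√κ/ln κ`. -/
theorem chebyshev_degree_lower_bound :
    ∃ c : ℝ, 0 < c ∧
      ∀ κ : ℝ, 2 ≤ κ → ∀ p : Polynomial ℝ, p.eval 0 = 1 →
        (∀ x ∈ Set.Icc (1 / κ) 1, |p.eval x| ≤ 1 / 3) →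
        c * Real.sqrt κ / Real.log κ ≤ (p.natDegree : ℝ) := by
  refine ⟨1 / 8, by norm_num, fun κ hκ p hp0 hp => ?_⟩
  have hdeg := log_three_mul_sqrt_le_four_mul_natDegree hκ hp0 hp
  have hlog3 : 1 ≤ log 3 := by linarith [log_three_gt_d9]
  have hlogκ : 1 / 2 ≤ log κ := by
    linarith [log_two_gt_d9, log_le_log (by norm_num) hκ]
  rw [div_le_iff₀ (by linarith)]
  nlinarith [mul_le_mul_of_nonneg_right hlog3 (sqrt_nonneg κ),
    mul_le_mul_of_nonneg_left hlogκ (Nat.cast_nonneg (α := ℝ) p.natDegree)]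
end

section
/- For every real κ ≥ 1 and every real r with 1/κ ≤ r ≤ 1, ∫_{1/κ}^{1} x^{−3/2} · ln|1 − x/r| dx ≥ −2·ln(8/r). -/
open Matrix Polynomial Set

/-!
With `s = √r` and the substitution `x = u²`, the integrand has the explicit primitive
`x ↦ logPrimitive s √x`, which stays continuous across the logarithmic singularity `x = r`; so the
integral is `logPrimitive s 1 - logPrimitive s √(1 / κ)`. Convexity of `y ↦ y log y` gives
`logPrimitive s t ≤ 0` for `0 < t ≤ s`, and since `(1 + s) log (1 + s) - (1 - s) log (1 - s)` has
derivative `2 + log (1 - s²) ≤ 2`, `logPrimitive s 1 ≥ 4 log s - 4`. Finally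
`-2 log (8 / r) = 4 log s - 6 log 2` and `6 log 2 > 4`.
-/

open Real Interval MeasureTheory

lemma mul_log_le_midpoint {s t : ℝ} (hts : |t| ≤ s) :
    2 * (s * log s) ≤ (s - t) * log (s - t) + (s + t) * log (s + t) := by
  have h := convexOn_mul_log.2 (mem_Ici.2 (by linarith [le_abs_self t] : 0 ≤ s - t))
    (mem_Ici.2 (by linarith [neg_abs_le t] : 0 ≤ s + t))
    (by norm_num : (0 : ℝ) ≤ 1 / 2) (by norm_num : (0 : ℝ) ≤ 1 / 2) (by norm_num)
  simp only [smul_eq_mul] at h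
  rw [show 1 / 2 * (s - t) + 1 / 2 * (s + t) = s by ring] at h
  linarith

lemma mul_log_one_add_sub_mul_log_one_sub_le {s : ℝ} (hs₀ : 0 ≤ s) (hs₁ : s ≤ 1) :
    (1 + s) * log (1 + s) - (1 - s) * log (1 - s) ≤ 2 * s := by
  set g : ℝ → ℝ := fun y => (1 + y) * log (1 + y) - (1 - y) * log (1 - y)
  have hg : ∀ y ∈ interior (Icc (0 : ℝ) 1), HasDerivAt g (2 + log (1 - y ^ 2)) y := by
    intro y hy
    rw [interior_Icc] at hy
    obtain ⟨hy₀, hy₁⟩ := hy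
    have hp := (hasDerivAt_mul_log (by linarith : 1 + y ≠ 0)).comp y
      ((hasDerivAt_id y).const_add 1)
    have hm := (hasDerivAt_mul_log (by linarith : 1 - y ≠ 0)).comp y
      ((hasDerivAt_id y).const_sub 1)
    refine (hp.sub hm).congr_deriv ?_
    rw [show 1 - y ^ 2 = (1 + y) * (1 - y) by ring, log_mul (by linarith) (by linarith)]
    ring
  have hcont : Continuous g := by
    have h := continuous_mul_log
    have h1 : Continuous fun y : ℝ => (1 + y) * log (1 + y) := h.comp (continuous_const_add 1)
    have h2 : Continuous fun y : ℝ => (1 - y) * log (1 - y) := h.comp (continuous_sub_left 1)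
    exact h1.sub h2
  have := (convex_Icc (0 : ℝ) 1).image_sub_le_mul_sub_of_deriv_le hcont.continuousOn
    (fun y hy => (hg y hy).differentiableAt.differentiableWithinAt) (C := 2) (fun y hy => ?_)
    0 (left_mem_Icc.2 zero_le_one) s ⟨hs₀, hs₁⟩ hs₀
  · simpa [g] using this
  · rw [(hg y hy).deriv, add_le_iff_nonpos_right]
    rw [interior_Icc] at hy
    exact log_nonpos (by nlinarith [hy.1, hy.2]) (by nlinarith)

noncomputable def logPrimitive (s u : ℝ) : ℝ :=
  (2 / s * ((u - s) * log (u - s) - (u + s) * log (u + s)) + 4 * log s) / u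

lemma continuousOn_logPrimitive (s : ℝ) : ContinuousOn (logPrimitive s) (Ioi 0) := by
  have h := continuous_mul_log
  have h₁ : Continuous fun u : ℝ => (u - s) * log (u - s) := h.comp (continuous_sub_right s)
  have h₂ : Continuous fun u : ℝ => (u + s) * log (u + s) := h.comp (continuous_add_const s)
  exact ContinuousOn.div (by fun_prop) continuousOn_id fun u hu => ne_of_gt hu

lemma log_one_sub_sq_div_sq {s u : ℝ} (hs : s ≠ 0) (hus : u - s ≠ 0) (hus' : u + s ≠ 0) :
    log (1 - u ^ 2 / s ^ 2) = log (u - s) + log (u + s) - 2 * log s := by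
  rw [show 1 - u ^ 2 / s ^ 2 = -((u - s) * (u + s) / s ^ 2) by field_simp; ring, log_neg_eq_log,
    log_div (mul_ne_zero hus hus') (pow_ne_zero 2 hs), log_mul hus hus', log_pow]
  push_cast
  ring

lemma hasDerivAt_logPrimitive {s u : ℝ} (hs : 0 < s) (hu : 0 < u) (hne : u ≠ s) :
    HasDerivAt (logPrimitive s) (2 * log (1 - u ^ 2 / s ^ 2) / u ^ 2) u := by
  have hus : u - s ≠ 0 := sub_ne_zero.2 hne
  have hus' : u + s ≠ 0 := by positivity
  have h₁ := (hasDerivAt_mul_log hus).comp u ((hasDerivAt_id u).sub_const s)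
  have h₂ := (hasDerivAt_mul_log hus').comp u ((hasDerivAt_id u).add_const s)
  refine ((((h₁.sub h₂).const_mul (2 / s)).add_const (4 * log s)).div (hasDerivAt_id u)
    hu.ne').congr_deriv ?_
  rw [log_one_sub_sq_div_sq hs.ne' hus hus']
  simp only [Pi.sub_apply, Function.comp_apply, id]
  field_simp
  ring

lemma rpow_neg_three_halves {x : ℝ} (hx : 0 ≤ x) : x ^ (-(3 : ℝ) / 2) = (√x ^ 3)⁻¹ := by
  rw [sqrt_eq_rpow, ← rpow_natCast, ← rpow_mul hx, ← rpow_neg hx]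
  norm_num

lemma hasDerivAt_logPrimitive_sqrt {r x : ℝ} (hr : 0 < r) (hx : 0 < x) (hne : x ≠ r) :
    HasDerivAt (fun x => logPrimitive √r √x) (x ^ (-(3 : ℝ) / 2) * log |1 - x / r|) x := by
  have hne' : √x ≠ √r := fun h => hne (by rwa [sqrt_inj hx.le hr.le] at h)
  refine ((hasDerivAt_logPrimitive (sqrt_pos.2 hr) (sqrt_pos.2 hx) hne').comp x
    (hasDerivAt_sqrt hx.ne')).congr_deriv ?_
  rw [sq_sqrt hx.le, sq_sqrt hr.le, rpow_neg_three_halves hx.le, log_abs, pow_succ,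
    sq_sqrt hx.le]
  have hx' := sqrt_pos.2 hx
  field_simp

lemma intervalIntegrable_rpow_mul_log_abs_one_sub_div {a b : ℝ} (p r : ℝ) (ha : 0 < a)
    (hb : 0 < b) :
    IntervalIntegrable (fun x => x ^ p * log |1 - x / r|) volume a b := by
  have hlin : AnalyticOnNhd ℝ (fun x : ℝ => 1 - x / r) [[a, b]] := fun x _ => by fun_prop
  have hlog : IntervalIntegrable (fun x => log |1 - x / r|) volume a b := by
    simpa only [norm_eq_abs] using hlin.meromorphicOn.intervalIntegrable_log_norm
  exact hlog.continuousOn_mul <| continuousOn_id.rpow_const fun _ hx =>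
    Or.inl (ne_of_gt (lt_min ha hb |>.trans_le hx.1))

theorem integral_rpow_mul_log_abs_one_sub_div {a b r : ℝ} (ha : 0 < a) (hab : a ≤ b)
    (hr : 0 < r) :
    ∫ x in a..b, x ^ (-(3 : ℝ) / 2) * log |1 - x / r| = logPrimitive √r √b - logPrimitive √r √a :=
  integral_eq_of_hasDerivAt_off_countable_of_le (fun x => logPrimitive √r √x) _ hab
    (countable_singleton r)
    ((continuousOn_logPrimitive _).comp continuous_sqrt.continuousOn
      fun _ hx => sqrt_pos.2 (ha.trans_le hx.1))
    (fun _ hx => hasDerivAt_logPrimitive_sqrt hr (ha.trans hx.1.1) hx.2)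
    (intervalIntegrable_rpow_mul_log_abs_one_sub_div _ r ha (ha.trans_le hab))

lemma logPrimitive_nonpos {s t : ℝ} (ht : 0 < t) (hts : t ≤ s) : logPrimitive s t ≤ 0 := by
  have hs : 0 < s := ht.trans_le hts
  have hmid := mul_log_le_midpoint (abs_of_pos ht ▸ hts)
  have hneg : (t - s) * log (t - s) = -((s - t) * log (s - t)) := by
    rw [← neg_sub s t, log_neg_eq_log, neg_mul]
  refine div_nonpos_of_nonpos_of_nonneg ?_ ht.le
  calc 2 / s * ((t - s) * log (t - s) - (t + s) * log (t + s)) + 4 * log s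
      ≤ 2 / s * -(2 * (s * log s)) + 4 * log s := by
        rw [hneg, add_comm t s]
        gcongr
        linarith
    _ = 0 := by field_simp; ring

lemma le_logPrimitive_one {s : ℝ} (hs₀ : 0 < s) (hs₁ : s ≤ 1) :
    4 * log s - 4 ≤ logPrimitive s 1 := by
  have h := mul_log_one_add_sub_mul_log_one_sub_le hs₀.le hs₁
  rw [logPrimitive, div_one]
  calc 4 * log s - 4 = 2 / s * -(2 * s) + 4 * log s := by field_simp; ring
    _ ≤ _ := by gcongr; linarith

/-- For `κ ≥ 1` and `1/κ ≤ r ≤ 1`,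
`∫_{1/κ}^{1} x^{-3/2} ln|1 - x/r| dx ≥ -2 ln(8/r)`. -/
theorem weighted_log_integral_single_root
    (κ r : ℝ) (hκ : 1 ≤ κ) (hr1 : 1 / κ ≤ r) (hr2 : r ≤ 1) :
    -2 * Real.log (8 / r) ≤
      ∫ x in (1 / κ)..1, x ^ (-(3 : ℝ) / 2) * Real.log |1 - x / r| := by
  have ha : 0 < 1 / κ := one_div_pos.2 (zero_lt_one.trans_le hκ)
  have hr : 0 < r := ha.trans_le hr1
  rw [integral_rpow_mul_log_abs_one_sub_div ha (hr1.trans hr2) hr, sqrt_one]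
  have h₁ := le_logPrimitive_one (sqrt_pos.2 hr) (sqrt_le_one.2 hr2)
  have h₂ := logPrimitive_nonpos (sqrt_pos.2 ha) (sqrt_le_sqrt hr1)
  have h₈ : log (8 / r) = 3 * log 2 - 2 * log √r := by
    rw [log_div (by norm_num) hr.ne', log_sqrt hr.le, show (8 : ℝ) = 2 ^ 3 by norm_num, log_pow]
    push_cast
    ring
  linarith [log_two_gt_d9]
end

section
/- Let p be a real polynomial of degree d ≥ 1, let A ≥ 0 be real with |p(x)| ≤ A for all x ∈ [−1, 1], and let η be real with 0 < η < 1/(2d²). Then |p(x)| ≤ 2A for all x ∈ [−1 − η, 1 + η]. -/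
open Matrix Polynomial Set

lemma my_natDegree_T_le (n : ℕ) : (Polynomial.Chebyshev.T ℝ (n : ℤ)).natDegree ≤ n := by
  induction n using Nat.twoStepInduction with
  | zero => simp [Polynomial.Chebyshev.T_zero]
  | one => simp [Polynomial.Chebyshev.T_one]
  | more n ih1 ih2 =>
    rw [show ((n + 2 : ℕ) : ℤ) = (n : ℤ) + 2 by push_cast; ring,
      Polynomial.Chebyshev.T_add_two]
    refine le_trans (Polynomial.natDegree_sub_le _ _) (max_le ?_ ?_)
    · refine le_trans (Polynomial.natDegree_mul_le) ?_
      have h1 : (2 * X : ℝ[X]).natDegree ≤ 1 :=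
        le_trans Polynomial.natDegree_mul_le (by simp)
      have h2 : ((n + 1 : ℕ) : ℤ) = (n : ℤ) + 1 := by push_cast; ring
      rw [← h2] at *
      omega
    · omega

lemma my_T_real_cosh (n : ℕ) (t : ℝ) :
    (Polynomial.Chebyshev.T ℝ (n : ℤ)).eval (Real.cosh t) = Real.cosh (n * t) := by
  have key : Complex.ofReal ((Polynomial.Chebyshev.T ℝ (n : ℤ)).eval (Real.cosh t))
      = Complex.ofReal (Real.cosh (n * t)) := by
    have h1 : Complex.ofReal ((Polynomial.Chebyshev.T ℝ (n : ℤ)).eval (Real.cosh t))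
        = (Polynomial.Chebyshev.T ℂ (n : ℤ)).eval (Complex.ofReal (Real.cosh t)) := by
      rw [← Polynomial.Chebyshev.map_T (algebraMap ℝ ℂ), Polynomial.eval_map]
      exact (Polynomial.eval₂_at_apply (algebraMap ℝ ℂ) (Real.cosh t)).symm
    rw [h1, Complex.ofReal_cosh, ← Complex.cos_mul_I, Polynomial.Chebyshev.T_complex_cos,
      show (((n : ℕ) : ℤ) : ℂ) * ((t : ℂ) * Complex.I) = (((n : ℝ) * t : ℝ) : ℂ) * Complex.I by push_cast; ring,
      Complex.cos_mul_I, Complex.ofReal_cosh]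
  exact_mod_cast key

lemma my_cosh_quad (t : ℝ) (ht : 0 ≤ t) : 1 + t ^ 2 / 2 ≤ Real.cosh t := by
  have h1 : Real.cosh t = 2 * Real.sinh (t / 2) ^ 2 + 1 := by
    have := Real.cosh_sq_sub_sinh_sq (t / 2)
    have h2 := Real.cosh_two_mul (t / 2)
    rw [show 2 * (t / 2) = t by ring] at h2
    nlinarith
  have h3 : t / 2 ≤ Real.sinh (t / 2) := Real.self_le_sinh_iff.mpr (by linarith)
  nlinarith

lemma my_cosh_one_le : Real.cosh 1 ≤ 2 := by
  rw [Real.cosh_eq]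
  have h1 := Real.exp_one_lt_d9
  have h2 : Real.exp (-1) ≤ 1 := by
    rw [Real.exp_le_one_iff]; norm_num
  linarith



lemma my_key (p : Polynomial ℝ) (d : ℕ) (hd : p.natDegree = d) (hd1 : 1 ≤ d)
    (A : ℝ) (hbound : ∀ x ∈ Set.Icc (-1 : ℝ) 1, |p.eval x| ≤ A)
    (η : ℝ) (hη : 0 < η) (hη2 : η < 1 / (2 * (d : ℝ) ^ 2))
    (x : ℝ) (hx1 : 1 ≤ x) (hx2 : x ≤ 1 + η) : |p.eval x| ≤ 2 * A := by
  have hA : 0 ≤ A := le_trans (abs_nonneg _) (hbound 1 ⟨by norm_num, le_refl 1⟩)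
  have hdR : (0 : ℝ) < d := by exact_mod_cast Nat.pos_of_ne_zero (by omega)
  have hpi := Real.pi_pos
  -- Chebyshev extremal nodes
  set v : Fin (d + 1) → ℝ := fun k => Real.cos ((k : ℕ) * Real.pi / d) with hv
  have hanti : ∀ a b : Fin (d + 1), a < b → v b < v a := by
    intro a b hab
    apply Real.cos_lt_cos_of_nonneg_of_le_pi
    · positivity
    · rw [div_le_iff₀ hdR]
      have hb : ((b : ℕ) : ℝ) ≤ (d : ℝ) := by exact_mod_cast Nat.lt_succ_iff.mp b.isLt
      nlinarith
    · have hab' : ((a : ℕ) : ℝ) < ((b : ℕ) : ℝ) := by exact_mod_cast hab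
      gcongr
  have hinj : Set.InjOn v (Finset.univ : Finset (Fin (d + 1))) := by
    intro a _ b _ hab
    rcases lt_trichotomy a b with h | h | h
    · exact absurd hab (ne_of_gt (hanti a b h))
    · exact h
    · exact absurd hab (ne_of_lt (hanti b a h))
  have hvle : ∀ k : Fin (d + 1), v k ≤ 1 := fun k => Real.cos_le_one _
  have hvge : ∀ k : Fin (d + 1), -1 ≤ v k := fun k => Real.neg_one_le_cos _
  have hxv : ∀ k : Fin (d + 1), 0 ≤ x - v k := fun k => by linarith [hvle k]
  have hcard : (Finset.univ : Finset (Fin (d + 1))).card = d + 1 := by simp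
  -- Lagrange basis values at x
  set L : Fin (d + 1) → ℝ := fun k => (Lagrange.basis Finset.univ v k).eval x with hL
  have hLprod : ∀ k, L k = ∏ j ∈ Finset.univ.erase k, ((v k - v j)⁻¹ * (x - v j)) := by
    intro k
    rw [hL]
    simp only [Lagrange.basis, Polynomial.eval_prod]
    exact Finset.prod_congr rfl fun j _ => by simp [Lagrange.basisDivisor]
  -- sign of L k
  have hsign : ∀ k : Fin (d + 1), 0 ≤ (-1 : ℝ) ^ (k : ℕ) * L k := by
    intro k
    have hpow : ((-1 : ℝ)) ^ (k : ℕ) =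
        ∏ j ∈ Finset.univ.erase k, (if j < k then (-1 : ℝ) else 1) := by
      rw [Finset.prod_ite, Finset.prod_const, Finset.prod_const, one_pow, mul_one]
      congr 1
      have hfe : (Finset.univ.erase k).filter (· < k) = Finset.Iio k := by
        ext j
        simp only [Finset.mem_filter, Finset.mem_erase, Finset.mem_univ, Finset.mem_Iio,
          true_and, and_true]
        exact ⟨fun h => h.2, fun h => ⟨ne_of_lt h, h⟩⟩
      rw [hfe, Fin.card_Iio]
    rw [hLprod k, hpow, ← Finset.prod_mul_distrib]
    apply Finset.prod_nonneg
    intro j hj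
    have hjk : j ≠ k := (Finset.mem_erase.mp hj).1
    rcases lt_or_gt_of_ne hjk with hlt | hgt
    · rw [if_pos hlt]
      have h1 : (v k - v j)⁻¹ ≤ 0 := inv_nonpos.mpr (by linarith [hanti j k hlt])
      have := mul_nonpos_of_nonpos_of_nonneg h1 (hxv j)
      linarith
    · rw [if_neg (not_lt.mpr hgt.le)]
      have h1 : 0 ≤ (v k - v j)⁻¹ := inv_nonneg.mpr (by linarith [hanti k j hgt])
      have := mul_nonneg h1 (hxv j)
      linarith
  have habsL : ∀ k : Fin (d + 1), |L k| = (-1 : ℝ) ^ (k : ℕ) * L k := by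
    intro k
    rw [← abs_of_nonneg (hsign k), abs_mul, abs_pow, abs_neg, abs_one, one_pow, one_mul]
  -- interpolation of p
  have hpdeg : p.degree < ((Finset.univ : Finset (Fin (d + 1))).card : WithBot ℕ) := by
    rw [hcard]
    calc p.degree ≤ (p.natDegree : WithBot ℕ) := Polynomial.degree_le_natDegree
    _ < ((d + 1 : ℕ) : WithBot ℕ) := by rw [hd]; exact_mod_cast Nat.lt_succ_self d
  have hpeval : p.eval x = ∑ k, p.eval (v k) * L k := by
    conv_lhs => rw [Lagrange.eq_interpolate hinj hpdeg]
    simp [Lagrange.interpolate_apply, Polynomial.eval_finset_sum, hL]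
  -- interpolation of T d
  have hTdeg : (Polynomial.Chebyshev.T ℝ (d : ℤ)).degree <
      ((Finset.univ : Finset (Fin (d + 1))).card : WithBot ℕ) := by
    rw [hcard]
    calc (Polynomial.Chebyshev.T ℝ (d : ℤ)).degree
        ≤ ((Polynomial.Chebyshev.T ℝ (d : ℤ)).natDegree : WithBot ℕ) :=
          Polynomial.degree_le_natDegree
    _ ≤ ((d : ℕ) : WithBot ℕ) := by exact_mod_cast my_natDegree_T_le d
    _ < ((d + 1 : ℕ) : WithBot ℕ) := by exact_mod_cast Nat.lt_succ_self d
  have hTnode : ∀ k : Fin (d + 1),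
      (Polynomial.Chebyshev.T ℝ (d : ℤ)).eval (v k) = (-1 : ℝ) ^ (k : ℕ) := by
    intro k
    have harg : ((d : ℤ) : ℝ) * ((k : ℕ) * Real.pi / d) = (k : ℕ) * Real.pi := by
      push_cast
      field_simp
    rw [hv]
    show (Polynomial.Chebyshev.T ℝ (d : ℤ)).eval (Real.cos ((k : ℕ) * Real.pi / d)) = _
    rw [Polynomial.Chebyshev.T_real_cos, harg]
    have := Real.cos_nat_mul_pi_sub 0 (k : ℕ)
    simpa using this
  have hTeval : (Polynomial.Chebyshev.T ℝ (d : ℤ)).eval x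
      = ∑ k : Fin (d + 1), (-1 : ℝ) ^ (k : ℕ) * L k := by
    conv_lhs => rw [Lagrange.eq_interpolate hinj hTdeg]
    simp only [Lagrange.interpolate_apply, Polynomial.eval_finset_sum, Polynomial.eval_mul,
      Polynomial.eval_C]
    exact Finset.sum_congr rfl fun k _ => by rw [hTnode k]
  -- the bound |p x| ≤ A * T d x
  have hstep : |p.eval x| ≤ A * (Polynomial.Chebyshev.T ℝ (d : ℤ)).eval x := by
    rw [hpeval, hTeval, Finset.mul_sum]
    refine le_trans (Finset.abs_sum_le_sum_abs _ _) (Finset.sum_le_sum fun k _ => ?_)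
    rw [abs_mul, habsL k]
    exact mul_le_mul_of_nonneg_right (hbound (v k) ⟨hvge k, hvle k⟩) (hsign k)
  -- bound T d x by 2
  set t := Real.sqrt (2 * η) with htdef
  have ht0 : 0 ≤ t := Real.sqrt_nonneg _
  have ht2 : t ^ 2 = 2 * η := Real.sq_sqrt (by positivity)
  have htd : (d : ℝ) * t ≤ 1 := by
    have h1 : t < 1 / d := by
      rw [htdef, Real.sqrt_lt' (by positivity)]
      rw [div_pow, one_pow]
      rw [lt_div_iff₀ (by positivity)]
      rw [lt_div_iff₀ (by positivity)] at hη2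
      nlinarith
    have := mul_lt_mul_of_pos_left h1 hdR
    rw [mul_one_div, div_self (ne_of_gt hdR)] at this
    linarith
  have hxle : x ≤ Real.cosh t := by
    have := my_cosh_quad t ht0
    rw [ht2] at this
    linarith
  have hone : Real.cosh 0 = 1 := Real.cosh_zero
  obtain ⟨s, hs, hcs⟩ : ∃ s ∈ Set.Icc (0 : ℝ) t, Real.cosh s = x := by
    have hsub := intermediate_value_Icc ht0 (Real.continuous_cosh.continuousOn)
    have hmem : x ∈ Set.Icc (Real.cosh 0) (Real.cosh t) := ⟨by rw [hone]; exact hx1, hxle⟩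
    obtain ⟨s, hs, hcs⟩ := hsub hmem
    exact ⟨s, hs, hcs⟩
  have hs0 : 0 ≤ s := hs.1
  have hTx : (Polynomial.Chebyshev.T ℝ (d : ℤ)).eval x = Real.cosh ((d : ℝ) * s) := by
    rw [← hcs, my_T_real_cosh]
  have hT2 : (Polynomial.Chebyshev.T ℝ (d : ℤ)).eval x ≤ 2 := by
    rw [hTx]
    refine le_trans ?_ my_cosh_one_le
    rw [Real.cosh_le_cosh]
    rw [abs_of_nonneg (by positivity), abs_one]
    have : (d : ℝ) * s ≤ (d : ℝ) * t := mul_le_mul_of_nonneg_left hs.2 (le_of_lt hdR)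
    linarith
  calc |p.eval x| ≤ A * (Polynomial.Chebyshev.T ℝ (d : ℤ)).eval x := hstep
  _ ≤ A * 2 := mul_le_mul_of_nonneg_left hT2 hA
  _ = 2 * A := by ring

/-- A Markov-brothers-type growth bound: a polynomial of degree `d ≥ 1` which is
bounded by `A` on `[-1, 1]` is bounded by `2A` on `[-1 - η, 1 + η]` whenever
`0 < η < 1/(2d²)`. -/
theorem bounded_polynomial_extension
    (p : Polynomial ℝ) (d : ℕ) (hd : p.natDegree = d) (hd1 : 1 ≤ d)
    (A : ℝ) (hA : 0 ≤ A)
    (hbound : ∀ x ∈ Set.Icc (-1 : ℝ) 1, |p.eval x| ≤ A)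
    (η : ℝ) (hη : 0 < η) (hη2 : η < 1 / (2 * (d : ℝ) ^ 2)) :
    ∀ x ∈ Set.Icc (-1 - η) (1 + η), |p.eval x| ≤ 2 * A := by
  intro x hx
  by_cases h1 : x ≤ 1
  · by_cases h2 : -1 ≤ x
    · have := hbound x ⟨h2, h1⟩
      linarith
    · -- x < -1 : reflect
      push_neg at h2
      set q : Polynomial ℝ := p.comp (-Polynomial.X) with hq
      have hqd : q.natDegree = d := by
        rw [hq, Polynomial.natDegree_comp]
        simp [hd]
      have hqe : ∀ y : ℝ, q.eval y = p.eval (-y) := by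
        intro y; rw [hq]; simp [Polynomial.eval_comp]
      have hqbound : ∀ y ∈ Set.Icc (-1 : ℝ) 1, |q.eval y| ≤ A := by
        intro y hy
        rw [hqe]
        exact hbound (-y) ⟨by linarith [hy.2], by linarith [hy.1]⟩
      have := my_key q d hqd hd1 A hqbound η hη hη2 (-x) (by linarith) (by linarith [hx.1])
      rw [hqe, neg_neg] at this
      exact this
  · push_neg at h1
    exact my_key p d hd hd1 A hbound η hη hη2 x h1.le hx.2
end

section
/- Let n ≥ 1 and let v ∈ ℝⁿ be a unit vector. If z is drawn uniformly at random from {−1, 1}ⁿ, then the probability that ⟨z, v⟩² ≥ 1/n is at least 1/2. -/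
open Matrix Polynomial Set

/-!
Pick a coordinate `j` with `v j ^ 2 ≥ 1 / n`; it exists because the `v i ^ 2` sum to `1`.
Flipping the `j`-th sign changes `⟨z, v⟩` by `± 2 v j`, so the two values `a, b` of a flipped
pair satisfy `(a - b) ^ 2 = 4 v j ^ 2 ≥ 4 / n`, and `a ^ 2 + b ^ 2 ≥ (a - b) ^ 2 / 2` forces
`a ^ 2 ≥ 1 / n` or `b ^ 2 ≥ 1 / n`. Hence the flip, an involution, maps the bad sign vectors
injectively into the good ones.
-/

open Finset

lemma le_sq_or_le_sq_of_four_mul_le_sq_sub {a b c : ℝ} (h : 4 * c ≤ (a - b) ^ 2) :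
    c ≤ a ^ 2 ∨ c ≤ b ^ 2 := by
  by_contra! hlt
  nlinarith [sq_nonneg (a + b)]

lemma exists_sum_div_card_le {ι : Type*} [Fintype ι] {f : ι → ℝ} (hf : ∑ i, f i ≠ 0) :
    ∃ i, (∑ j, f j) / Fintype.card ι ≤ f i := by
  have hne := nonempty_of_sum_ne_zero hf
  have : Nonempty ι := univ_nonempty_iff.mp hne
  obtain ⟨i, -, hi⟩ := exists_le_of_sum_le hne
    (f := fun _ => (∑ j, f j) / Fintype.card ι) (g := f) <| by
      rw [sum_const, card_univ, nsmul_eq_mul, mul_div_cancel₀]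
      exact_mod_cast Fintype.card_ne_zero
  exact ⟨i, hi⟩

lemma card_le_two_mul_card_filter_of_injective {α : Type*} [Fintype α] {P : α → Prop}
    [DecidablePred P] {σ : α → α} (hσ : σ.Injective) (hP : ∀ z, ¬P z → P (σ z)) :
    Fintype.card α ≤ 2 * #(univ.filter P) := by
  have hle : #(univ.filter (¬P ·)) ≤ #(univ.filter P) :=
    card_le_card_of_injOn σ (fun z hz => by simp_all) hσ.injOn
  have htot := card_filter_add_card_filter_not (s := univ) P
  rw [card_univ] at htot
  omega

section SignVectors

variable {ι : Type*}

def signSum [Fintype ι] (v : ι → ℝ) (z : ι → Bool) : ℝ :=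
  ∑ i, (if z i then 1 else -1) * v i

variable [DecidableEq ι]

def flipSign (j : ι) (z : ι → Bool) : ι → Bool :=
  Function.update z j (!z j)

lemma flipSign_involutive (j : ι) : Function.Involutive (flipSign j) := by
  intro z
  simp [flipSign]

variable [Fintype ι]

lemma signSum_flipSign (v : ι → ℝ) (z : ι → Bool) (j : ι) :
    signSum v (flipSign j z) = signSum v z - 2 * ((if z j then 1 else -1) * v j) := by
  have hterm : ∀ i, (if flipSign j z i then (1 : ℝ) else -1) * v i =
      (if z i then 1 else -1) * v i - if j = i then 2 * ((if z j then 1 else -1) * v j) else 0 := by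
    intro i
    by_cases h : j = i
    · subst h
      cases h : z j <;> simp [flipSign, h] <;> ring
    · simp [flipSign, Function.update_of_ne (Ne.symm h), h]
  simp only [signSum, hterm, sum_sub_distrib, sum_ite_eq, Finset.mem_univ, if_true]

lemma le_sq_signSum_or_flipSign {v : ι → ℝ} {c : ℝ} {j : ι} (hj : c ≤ v j ^ 2) (z : ι → Bool) :
    c ≤ signSum v z ^ 2 ∨ c ≤ signSum v (flipSign j z) ^ 2 := by
  refine le_sq_or_le_sq_of_four_mul_le_sq_sub ?_
  rw [signSum_flipSign, sub_sub_cancel]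
  cases z j <;> norm_num <;> nlinarith

end SignVectors

open scoped Classical in
theorem random_sign_inner_product_general
    {n : ℕ} (v : Fin n → ℝ) (hv : vecNorm v = 1) :
    (1 : ℝ) / 2 ≤
      ((Finset.univ.filter fun z : Fin n → Bool =>
          (1 : ℝ) / n ≤ (∑ i, (if z i then (1 : ℝ) else -1) * v i) ^ 2).card : ℝ) / 2 ^ n := by
  have hsum : ∑ i, v i ^ 2 = 1 := Real.sqrt_eq_one.mp hv
  obtain ⟨j, hj⟩ := exists_sum_div_card_le (f := fun i => v i ^ 2) (by simp [hsum])
  simp only [hsum, Fintype.card_fin] at hj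
  have hcard := card_le_two_mul_card_filter_of_injective (flipSign_involutive j).injective
    fun z hz => (le_sq_signSum_or_flipSign hj z).resolve_left hz
  simp only [Fintype.card_fun, Fintype.card_bool, Fintype.card_fin] at hcard
  change (1 : ℝ) / 2 ≤ (#(univ.filter fun z => 1 / n ≤ signSum v z ^ 2) : ℝ) / 2 ^ n
  rw [le_div_iff₀ (by positivity)]
  have hcard' : (2 : ℝ) ^ n ≤ 2 * #(univ.filter fun z => 1 / n ≤ signSum v z ^ 2) := by
    exact_mod_cast hcard
  linarith

open scoped Classical in
/-- For a unit vector `v ∈ ℝⁿ` and a uniformly random sign vector `z`, the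
probability that `⟨z, v⟩² ≥ 1/n` is at least `1/2`. -/
theorem random_sign_inner_product
    {n : ℕ} (hn : 1 ≤ n) (v : Fin n → ℝ) (hv : vecNorm v = 1) :
    (1 : ℝ) / 2 ≤
      ((Finset.univ.filter fun z : Fin n → Bool =>
          (1 : ℝ) / n ≤ (∑ i, (if z i then (1 : ℝ) else -1) * v i) ^ 2).card : ℝ) / 2 ^ n :=
  random_sign_inner_product_general v hv
end
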